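/- The constant a_p = ∫_{Φ⁻¹((1−p)/2)}^{Φ⁻¹((1+p)/2)} |x| e^{−x²/2}/√(2π) dx is strictly positive for every p ∈ (0,1), and for a centered Gaussian random variable W with variance β > 0 and any event A with ℙ(A) ≥ p one has E[|W|·1_A] ≥ a_p √β. -/

import Mathlib

open MeasureTheory ProbabilityTheory

/-- The standard normal cumulative distribution function Φ. -/
noncomputable def Phi (x : ℝ) : ℝ := ∫ t in Set.Iic x, gaussianPDFReal 0 1 t

/-- The inverse of the standard normal CDF. -/
noncomputable def PhiInv : ℝ → ℝ := Function.invFun Phi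

/-- The constant `a_p`. -/
noncomputable def aConst (p : ℝ) : ℝ :=
  ∫ x in PhiInv ((1 - p) / 2)..PhiInv ((1 + p) / 2),
    |x| * Real.exp (-x ^ 2 / 2) / Real.sqrt (2 * Real.pi)

/-!
Let `q = Φ⁻¹((1 + p) / 2)`. The symmetry `Φ(-x) = 1 - Φ(x)` gives `Φ⁻¹((1 - p) / 2) = -q`, so for a
standard normal `Z` the constant `a_p` is `E[|Z|; |Z| ≤ q]` while `P(|Z| ≤ q) = p`; it is positive
because its integrand is continuous, nonnegative and positive at `q`. For an event `A` with
`P(A) ≥ p` and `B = {|Z| ≤ q}`, we have `|Z| ≤ q` on `B \ A`, `|Z| ≥ q` on `A \ B` and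
`P(B \ A) ≤ P(A \ B)`, hence `E[|Z|; B] ≤ E[|Z|; A]` (bathtub principle). The general case is the
scaling `W = √β Z`.
-/

open Real Set Filter
open scoped ENNReal NNReal

section Bathtub

variable {α : Type*} [MeasurableSpace α] {μ : Measure α} [IsFiniteMeasure μ] {s t : Set α}

theorem measure_sdiff_le_measure_sdiff (hs : MeasurableSet s) (ht : MeasurableSet t)
    (h : μ s ≤ μ t) : μ (s \ t) ≤ μ (t \ s) := by
  rwa [← ENNReal.add_le_add_iff_left (measure_ne_top μ (s ∩ t)), measure_inter_add_sdiff s ht,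
    inter_comm, measure_inter_add_sdiff t hs]

theorem setIntegral_le_setIntegral_of_sublevel {g : α → ℝ} (hg : Integrable g μ)
    (hs : MeasurableSet s) (ht : MeasurableSet t) (hst : μ s ≤ μ t) {c : ℝ} (hc : 0 ≤ c)
    (hle : ∀ x ∈ s, g x ≤ c) (hge : ∀ x ∉ s, c ≤ g x) :
    ∫ x in s, g x ∂μ ≤ ∫ x in t, g x ∂μ := by
  have hsdiff : μ.real (s \ t) ≤ μ.real (t \ s) :=
    ENNReal.toReal_mono (measure_ne_top μ _) (measure_sdiff_le_measure_sdiff hs ht hst)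
  have hupper : ∫ x in s \ t, g x ∂μ ≤ c * μ.real (s \ t) := by
    rw [mul_comm, ← smul_eq_mul, ← setIntegral_const]
    exact setIntegral_mono_on hg.integrableOn (integrableOn_const (measure_ne_top μ _))
      (hs.diff ht) fun x hx ↦ hle x hx.1
  have hlower : c * μ.real (t \ s) ≤ ∫ x in t \ s, g x ∂μ :=
    setIntegral_ge_of_const_le_real (ht.diff hs) (measure_ne_top μ _) (fun x hx ↦ hge x hx.2)
      hg.integrableOn
  calc ∫ x in s, g x ∂μ = ∫ x in s ∩ t, g x ∂μ + ∫ x in s \ t, g x ∂μ :=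
        (integral_inter_add_sdiff ht hg.integrableOn).symm
    _ ≤ ∫ x in t ∩ s, g x ∂μ + c * μ.real (t \ s) := by
        rw [inter_comm]; gcongr; exact hupper.trans (mul_le_mul_of_nonneg_left hsdiff hc)
    _ ≤ ∫ x in t ∩ s, g x ∂μ + ∫ x in t \ s, g x ∂μ := by gcongr
    _ = ∫ x in t, g x ∂μ := integral_inter_add_sdiff hs hg.integrableOn

end Bathtub

section StandardNormal

lemma gaussianPDFReal_zero_neg (v : ℝ≥0) (x : ℝ) :
    gaussianPDFReal 0 v (-x) = gaussianPDFReal 0 v x := by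
  simp [gaussianPDFReal]

lemma Phi_eq_add_intervalIntegral (x y : ℝ) :
    Phi y = Phi x + ∫ t in x..y, gaussianPDFReal 0 1 t := by
  rw [← intervalIntegral.integral_Iic_sub_Iic (integrable_gaussianPDFReal 0 1).integrableOn
    (integrable_gaussianPDFReal 0 1).integrableOn, Phi, Phi]
  ring

lemma Phi_strictMono : StrictMono Phi := fun x y hxy ↦ by
  rw [Phi_eq_add_intervalIntegral x y, lt_add_iff_pos_right]
  exact intervalIntegral.intervalIntegral_pos_of_pos
    (integrable_gaussianPDFReal 0 1).intervalIntegrable (gaussianPDFReal_pos 0 1 · one_ne_zero) hxy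

lemma Phi_continuous : Continuous Phi := by
  rw [funext (Phi_eq_add_intervalIntegral 0)]
  exact continuous_const.add (intervalIntegral.continuous_primitive
    (fun _ _ ↦ (integrable_gaussianPDFReal 0 1).intervalIntegrable) 0)

lemma Phi_eq_cdf : Phi = cdf (gaussianReal 0 1) := by
  ext x
  rw [cdf_eq_real, measureReal_def, gaussianReal_apply_eq_integral 0 one_ne_zero,
    ENNReal.toReal_ofReal (integral_nonneg (gaussianPDFReal_nonneg 0 1)), Phi]

lemma Phi_neg (x : ℝ) : Phi (-x) = 1 - Phi x := by
  have hIoi : Phi (-x) = ∫ t in Ioi x, gaussianPDFReal 0 1 t := by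
    rw [← neg_neg x, ← integral_comp_neg_Iic, neg_neg, Phi]
    simp only [gaussianPDFReal_zero_neg]
  rw [hIoi, ← integral_gaussianPDFReal_eq_one 0 one_ne_zero,
    ← intervalIntegral.integral_Iic_add_Ioi (integrable_gaussianPDFReal 0 1).integrableOn
      (integrable_gaussianPDFReal 0 1).integrableOn (b := x), Phi]
  ring

lemma Phi_zero : Phi 0 = 1 / 2 := by
  linarith [neg_zero (G := ℝ) ▸ Phi_neg 0]

lemma Phi_PhiInv {y : ℝ} (hy : y ∈ Ioo 0 1) : Phi (PhiInv y) = y := by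
  refine Function.invFun_eq (mem_range_of_exists_le_of_exists_ge Phi_continuous ?_ ?_)
  · exact ((Phi_eq_cdf ▸ tendsto_cdf_atBot _).eventually (eventually_le_nhds hy.1)).exists
  · exact ((Phi_eq_cdf ▸ tendsto_cdf_atTop _).eventually (eventually_ge_nhds hy.2)).exists

lemma PhiInv_one_sub {y : ℝ} (hy : y ∈ Ioo 0 1) : PhiInv (1 - y) = -PhiInv y :=
  Phi_strictMono.injective <| by
    rw [Phi_PhiInv ⟨by linarith [hy.2], by linarith [hy.1]⟩, Phi_neg, Phi_PhiInv hy]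

lemma PhiInv_pos {y : ℝ} (hy : y ∈ Ioo (1 / 2) 1) : 0 < PhiInv y :=
  Phi_strictMono.lt_iff_lt.mp <| by
    rw [Phi_zero, Phi_PhiInv ⟨by linarith [hy.1], hy.2⟩]; exact hy.1

lemma gaussianReal_Icc_eq_ofReal_Phi_sub {a b : ℝ} (hab : a ≤ b) :
    gaussianReal 0 1 (Icc a b) = ENNReal.ofReal (Phi b - Phi a) := by
  rw [gaussianReal_apply_eq_integral 0 one_ne_zero, integral_Icc_eq_integral_Ioc,
    ← intervalIntegral.integral_of_le hab, Phi_eq_add_intervalIntegral a b, add_sub_cancel_left]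

lemma setIntegral_gaussianReal_eq_setIntegral_mul {m : ℝ} {v : ℝ≥0} (hv : v ≠ 0) (f : ℝ → ℝ)
    {s : Set ℝ} (hs : MeasurableSet s) :
    ∫ x in s, f x ∂gaussianReal m v = ∫ x in s, gaussianPDFReal m v x * f x := by
  rw [← integral_indicator hs, integral_gaussianReal_eq_integral_smul hv,
    ← integral_indicator hs]
  congr 1 with x
  by_cases hx : x ∈ s <;> simp [hx]

end StandardNormal

section aConst

variable {p : ℝ} (hp : p ∈ Ioo 0 1)
include hp

lemma one_add_div_two_mem_Ioo : (1 + p) / 2 ∈ Ioo 0 1 :=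
  ⟨by linarith [hp.1], by linarith [hp.2]⟩

lemma PhiInv_one_add_div_two_pos : 0 < PhiInv ((1 + p) / 2) :=
  PhiInv_pos ⟨by linarith [hp.1], by linarith [hp.2]⟩

lemma aConst_eq_intervalIntegral :
    aConst p = ∫ x in -PhiInv ((1 + p) / 2)..PhiInv ((1 + p) / 2),
      |x| * exp (-x ^ 2 / 2) / √(2 * π) := by
  rw [aConst, show (1 - p) / 2 = 1 - (1 + p) / 2 by ring,
    PhiInv_one_sub (one_add_div_two_mem_Ioo hp)]

lemma aConst_pos : 0 < aConst p := by
  have hq := PhiInv_one_add_div_two_pos hp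
  rw [aConst_eq_intervalIntegral hp]
  exact intervalIntegral.integral_pos (by linarith) (by fun_prop) (fun x _ ↦ by positivity)
    ⟨_, right_mem_Icc.mpr (by linarith), by positivity⟩

lemma gaussianReal_Icc_PhiInv :
    gaussianReal 0 1 (Icc (-PhiInv ((1 + p) / 2)) (PhiInv ((1 + p) / 2))) = ENNReal.ofReal p := by
  rw [gaussianReal_Icc_eq_ofReal_Phi_sub (by linarith [PhiInv_one_add_div_two_pos hp]), Phi_neg,
    Phi_PhiInv (one_add_div_two_mem_Ioo hp)]
  congr 1
  ring

lemma aConst_eq_setIntegral_gaussianReal :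
    aConst p =
      ∫ x in Icc (-PhiInv ((1 + p) / 2)) (PhiInv ((1 + p) / 2)), |x| ∂gaussianReal 0 1 := by
  rw [setIntegral_gaussianReal_eq_setIntegral_mul one_ne_zero _ measurableSet_Icc,
    integral_Icc_eq_integral_Ioc,
    ← intervalIntegral.integral_of_le (by linarith [PhiInv_one_add_div_two_pos hp]),
    aConst_eq_intervalIntegral hp]
  congr 1 with x
  simp only [gaussianPDFReal, NNReal.coe_one, mul_one, sub_zero]
  ring

end aConst

lemma gaussianReal_div_sqrt {Ω : Type*} {mΩ : MeasurableSpace Ω} {P : Measure Ω}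
    {X : Ω → ℝ} {v : ℝ≥0} (hX : HasLaw X (gaussianReal 0 v) P) (hv : v ≠ 0) :
    HasLaw (fun ω ↦ X ω / √v) (gaussianReal 0 1) P := by
  convert gaussianReal_div_const hX √v using 2
  · simp
  · ext; simp [Real.sq_sqrt v.coe_nonneg, hv]

lemma integrable_abs_gaussianReal (m : ℝ) (v : ℝ≥0) :
    Integrable (fun x : ℝ ↦ |x|) (gaussianReal m v) :=
  ((memLp_id_gaussianReal 1).integrable le_rfl).abs

theorem aConst_le_setIntegral_abs_of_hasLaw {Ω : Type*} {mΩ : MeasurableSpace Ω} {μ : Measure Ω}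
    {Z : Ω → ℝ} (hZ : HasLaw Z (gaussianReal 0 1) μ) {p : ℝ} (hp : p ∈ Ioo 0 1) {A : Set Ω}
    (hA : MeasurableSet A) (hpA : ENNReal.ofReal p ≤ μ A) :
    aConst p ≤ ∫ ω in A, |Z ω| ∂μ := by
  have := hZ.isProbabilityMeasure
  obtain ⟨Y, hYm, hZY⟩ := hZ.aemeasurable
  have hY : HasLaw Y (gaussianReal 0 1) μ := hZ.congr hZY.symm
  set q := PhiInv ((1 + p) / 2)
  have hq : 0 < q := PhiInv_one_add_div_two_pos hp
  set B := Y ⁻¹' Icc (-q) q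
  have hμB : μ B = ENNReal.ofReal p := by
    rw [← gaussianReal_Icc_PhiInv hp, ← hY.map_eq, Measure.map_apply hYm measurableSet_Icc]
  have hintB : ∫ ω in B, |Y ω| ∂μ = aConst p := by
    rw [aConst_eq_setIntegral_gaussianReal hp, ← hY.map_eq,
      setIntegral_map measurableSet_Icc (by fun_prop) hYm.aemeasurable]
  have hint : Integrable (fun ω ↦ |Y ω|) μ :=
    (integrable_map_measure (g := fun x ↦ |x|) (by fun_prop) hYm.aemeasurable).mp
      (hY.map_eq ▸ integrable_abs_gaussianReal 0 1)
  calc aConst p = ∫ ω in B, |Y ω| ∂μ := hintB.symm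
    _ ≤ ∫ ω in A, |Y ω| ∂μ :=
      setIntegral_le_setIntegral_of_sublevel hint (hYm measurableSet_Icc) hA (hμB ▸ hpA) hq.le
        (fun ω hω ↦ abs_le.mpr hω) (fun ω hω ↦ (not_le.mp (abs_le.not.mpr hω)).le)
    _ = ∫ ω in A, |Z ω| ∂μ := setIntegral_congr_ae hA (hZY.mono fun ω h _ ↦ by rw [h])

theorem stmt_11 (p : ℝ) (hp : p ∈ Set.Ioo (0 : ℝ) 1) :
    0 < aConst p ∧
    ∀ {Ω : Type} {mΩ : MeasurableSpace Ω} (μ : Measure Ω) [IsProbabilityMeasure μ]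
      (β : ℝ) (hβ : 0 < β) (W : Ω → ℝ),
      Measure.map W μ = gaussianReal 0 β.toNNReal →
      ∀ A : Set Ω, MeasurableSet A → ENNReal.ofReal p ≤ μ A →
        aConst p * Real.sqrt β ≤ ∫ ω in A, |W ω| ∂μ := by
  refine ⟨aConst_pos hp, fun μ _ β hβ W hW A hA hpA ↦ ?_⟩
  have hWlaw : HasLaw W (gaussianReal 0 β.toNNReal) μ :=
    ⟨aemeasurable_of_map_neZero (by rw [hW]; infer_instance), hW⟩
  have hZ := gaussianReal_div_sqrt hWlaw (by simpa using hβ)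
  rw [Real.coe_toNNReal _ hβ.le] at hZ
  have hsβ : 0 < √β := Real.sqrt_pos.mpr hβ
  calc aConst p * √β ≤ (∫ ω in A, |W ω / √β| ∂μ) * √β := by
        gcongr; exact aConst_le_setIntegral_abs_of_hasLaw hZ hp hA hpA
    _ = ∫ ω in A, |W ω| ∂μ := by
        rw [← integral_mul_const]
        congr 1 with ω
        rw [abs_div, abs_of_pos hsβ, div_mul_cancel₀ _ hsβ.ne']
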